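/- Let S be a finite dataset of n ≥ 1 points with weights W : S → ℝ satisfying 1 ≤ W(x) ≤ λ for all x ∈ S, where λ ≥ 1. Then for every hypothesis class H, every h ∈ H, and every r > 0: (∑_{x ∈ DIS_S(B^W_H(h, r))} W(x)) / (r · ∑_{x ∈ S} W(x)) ≤ λ² · |DIS_S(B_H(h, λr))| / (λr · n). Consequently, the weighted disagreement coefficient θ^W_h = sup_{r>0} (∑_{x ∈ DIS_S(B^W_H(h, r))} W(x)) / (r · ∑_{x∈S} W(x)) is at most λ² · θ_h, where θ_h = sup_{r>0} |DIS_S(B_H(h, r))| / (r n). -/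

import Mathlib

open scoped Classical

/-- Unweighted distance between two hypotheses on the dataset `S`. -/
noncomputable def hypDist {α : Type*} (S : Finset α) (h h' : α → Bool) : ℝ :=
  ((S.filter fun x => h x ≠ h' x).card : ℝ) / S.card

/-- Weighted distance between two hypotheses on the dataset `S` with weights `W`. -/
noncomputable def hypDistW {α : Type*} (S : Finset α) (W : α → ℝ) (h h' : α → Bool) : ℝ :=
  (∑ x ∈ S.filter fun x => h x ≠ h' x, W x) / (∑ x ∈ S, W x)

/-- Unweighted ball of radius `r` around `h` inside `H`. -/
noncomputable def hypBall {α : Type*} (S : Finset α) (H : Set (α → Bool))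
    (h : α → Bool) (r : ℝ) : Set (α → Bool) :=
  {h' ∈ H | hypDist S h h' ≤ r}

/-- Weighted ball of radius `r` around `h` inside `H`. -/
noncomputable def hypBallW {α : Type*} (S : Finset α) (W : α → ℝ) (H : Set (α → Bool))
    (h : α → Bool) (r : ℝ) : Set (α → Bool) :=
  {h' ∈ H | hypDistW S W h h' ≤ r}

/-- Disagreement region (as a finite subset of `S`) of a set `V` of hypotheses. -/
noncomputable def DIS {α : Type*} (S : Finset α) (V : Set (α → Bool)) : Finset α :=
  S.filter fun x => ∃ h₁ ∈ V, ∃ h₂ ∈ V, h₁ x ≠ h₂ x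

/-- With weights `1 ≤ W(x) ≤ λ`, for every `r > 0` the weighted disagreement ratio at
radius `r` is at most `λ²` times the unweighted ratio at radius `λr`; consequently
the weighted disagreement coefficient is at most `λ²` times the unweighted one. -/
theorem stmt11 {α : Type*} (S : Finset α) (hS : 1 ≤ S.card)
    (W : α → ℝ) (lam : ℝ) (hlam : 1 ≤ lam)
    (hW : ∀ x ∈ S, 1 ≤ W x ∧ W x ≤ lam)
    (H : Set (α → Bool)) (h : α → Bool) (hh : h ∈ H) :
    (∀ r : ℝ, 0 < r →
      (∑ x ∈ DIS S (hypBallW S W H h r), W x) / (r * ∑ x ∈ S, W x)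
        ≤ lam ^ 2 * ((DIS S (hypBall S H h (lam * r))).card : ℝ) / (lam * r * S.card)) ∧
    (⨆ (r : ℝ) (_ : 0 < r),
        (∑ x ∈ DIS S (hypBallW S W H h r), W x) / (r * ∑ x ∈ S, W x))
      ≤ lam ^ 2 *
        ⨆ (r : ℝ) (_ : 0 < r),
          ((DIS S (hypBall S H h r)).card : ℝ) / (r * S.card) := by
  classical
  have hlam0 : (0:ℝ) < lam := lt_of_lt_of_le one_pos hlam
  have hn1 : (1:ℝ) ≤ (S.card : ℝ) := by exact_mod_cast hS
  have hn : (0:ℝ) < (S.card : ℝ) := lt_of_lt_of_le one_pos hn1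
  have hW0 : ∀ x ∈ S, (0:ℝ) ≤ W x := fun x hx => le_trans zero_le_one (hW x hx).1
  have hsum_lb : (S.card : ℝ) ≤ ∑ x ∈ S, W x := by
    calc (S.card : ℝ) = ∑ _x ∈ S, (1:ℝ) := by simp
      _ ≤ ∑ x ∈ S, W x := Finset.sum_le_sum fun x hx => (hW x hx).1
  have hsum_ub : ∑ x ∈ S, W x ≤ lam * S.card := by
    calc ∑ x ∈ S, W x ≤ ∑ _x ∈ S, lam := Finset.sum_le_sum fun x hx => (hW x hx).2
      _ = lam * S.card := by simp [mul_comm]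
  have hsum_pos : (0:ℝ) < ∑ x ∈ S, W x := lt_of_lt_of_le hn hsum_lb
  have hball : ∀ r : ℝ, 0 < r → hypBallW S W H h r ⊆ hypBall S H h (lam * r) := by
    intro r hr h' hmem
    obtain ⟨hH, hd⟩ := hmem
    refine ⟨hH, ?_⟩
    rw [hypDistW, div_le_iff₀ hsum_pos] at hd
    rw [hypDist, div_le_iff₀ hn]
    have hcard_le : ((S.filter fun x => h x ≠ h' x).card : ℝ)
        ≤ ∑ x ∈ S.filter (fun x => h x ≠ h' x), W x := by
      calc ((S.filter fun x => h x ≠ h' x).card : ℝ)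
          = ∑ _x ∈ S.filter (fun x => h x ≠ h' x), (1:ℝ) := by simp
        _ ≤ _ := Finset.sum_le_sum fun x hx => (hW x (Finset.mem_filter.mp hx).1).1
    calc ((S.filter fun x => h x ≠ h' x).card : ℝ)
        ≤ ∑ x ∈ S.filter (fun x => h x ≠ h' x), W x := hcard_le
      _ ≤ r * ∑ x ∈ S, W x := hd
      _ ≤ r * (lam * S.card) := by nlinarith
      _ = lam * r * S.card := by ring
  have key : ∀ r : ℝ, 0 < r →
      (∑ x ∈ DIS S (hypBallW S W H h r), W x) / (r * ∑ x ∈ S, W x)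
        ≤ lam ^ 2 * ((DIS S (hypBall S H h (lam * r))).card : ℝ) / (lam * r * S.card) := by
    intro r hr
    have hDsub : DIS S (hypBallW S W H h r) ⊆ DIS S (hypBall S H h (lam * r)) := by
      intro x hx
      rw [DIS, Finset.mem_filter] at hx ⊢
      obtain ⟨hxS, h₁, h1m, h₂, h2m, hne⟩ := hx
      exact ⟨hxS, h₁, hball r hr h1m, h₂, hball r hr h2m, hne⟩
    have hDS : DIS S (hypBall S H h (lam * r)) ⊆ S := Finset.filter_subset _ _
    have hnum : (∑ x ∈ DIS S (hypBallW S W H h r), W x)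
        ≤ lam * (DIS S (hypBall S H h (lam * r))).card := by
      calc (∑ x ∈ DIS S (hypBallW S W H h r), W x)
          ≤ ∑ x ∈ DIS S (hypBall S H h (lam * r)), W x :=
            Finset.sum_le_sum_of_subset_of_nonneg hDsub
              (fun x hx _ => hW0 x (hDS hx))
        _ ≤ ∑ _x ∈ DIS S (hypBall S H h (lam * r)), lam :=
            Finset.sum_le_sum fun x hx => (hW x (hDS hx)).2
        _ = lam * (DIS S (hypBall S H h (lam * r))).card := by simp [mul_comm]
    have heq : lam ^ 2 * ((DIS S (hypBall S H h (lam * r))).card : ℝ) / (lam * r * S.card)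
        = lam * (DIS S (hypBall S H h (lam * r))).card / (r * S.card) := by
      field_simp
    rw [heq]
    exact div_le_div₀ (by positivity) hnum (by positivity) (by nlinarith)
  refine ⟨key, ?_⟩
  -- bound on the unweighted ratio at each positive radius
  have hg : ∀ r : ℝ, 0 < r →
      ((DIS S (hypBall S H h r)).card : ℝ) / (r * S.card) ≤ (S.card : ℝ) := by
    intro r hr
    rcases Nat.eq_zero_or_pos (DIS S (hypBall S H h r)).card with h0 | hpos
    · rw [h0]
      simp only [Nat.cast_zero, zero_div]
      positivity
    · obtain ⟨x, hx⟩ := Finset.card_pos.mp hpos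
      obtain ⟨hxS, h₁, ⟨h1H, h1d⟩, h₂, ⟨h2H, h2d⟩, hne⟩ := Finset.mem_filter.mp hx
      have hexists : ∃ h' : α → Bool, hypDist S h h' ≤ r ∧ h x ≠ h' x := by
        by_cases hcase : h x = h₁ x
        · exact ⟨h₂, h2d, fun hc => hne (hcase.symm.trans hc)⟩
        · exact ⟨h₁, h1d, hcase⟩
      obtain ⟨h', hd, hxne⟩ := hexists
      have h1le : (1:ℝ) ≤ r * S.card := by
        have hxf : x ∈ S.filter (fun y => h y ≠ h' y) := Finset.mem_filter.mpr ⟨hxS, hxne⟩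
        have hc1 : (1:ℝ) ≤ ((S.filter fun y => h y ≠ h' y).card : ℝ) := by
          exact_mod_cast Finset.card_pos.mpr ⟨x, hxf⟩
        rw [hypDist, div_le_iff₀ hn] at hd
        linarith
      calc ((DIS S (hypBall S H h r)).card : ℝ) / (r * S.card)
          ≤ ((DIS S (hypBall S H h r)).card : ℝ) := div_le_self (by positivity) h1le
        _ ≤ (S.card : ℝ) := by
            exact_mod_cast Finset.card_le_card (Finset.filter_subset _ _)
  have hbdd : BddAbove (Set.range fun r : ℝ =>
      ⨆ _ : 0 < r, ((DIS S (hypBall S H h r)).card : ℝ) / (r * S.card)) := by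
    refine ⟨(S.card : ℝ), ?_⟩
    rintro _ ⟨r, rfl⟩
    dsimp only
    by_cases hr : 0 < r
    · rw [ciSup_pos hr]; exact hg r hr
    · haveI : IsEmpty (0 < r) := ⟨hr⟩
      rw [Real.iSup_of_isEmpty]
      exact le_of_lt hn
  have hsup_nonneg : (0:ℝ) ≤ ⨆ (r : ℝ) (_ : 0 < r),
      ((DIS S (hypBall S H h r)).card : ℝ) / (r * S.card) :=
    Real.iSup_nonneg fun r => Real.iSup_nonneg fun hr =>
      div_nonneg (Nat.cast_nonneg _) (mul_pos hr hn).le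
  have hrhs_nonneg : (0:ℝ) ≤ lam ^ 2 * ⨆ (r : ℝ) (_ : 0 < r),
      ((DIS S (hypBall S H h r)).card : ℝ) / (r * S.card) :=
    mul_nonneg (by positivity) hsup_nonneg
  refine Real.iSup_le (fun r => Real.iSup_le (fun hr => ?_) hrhs_nonneg) hrhs_nonneg
  have hterm : ((DIS S (hypBall S H h (lam * r))).card : ℝ) / (lam * r * S.card)
      ≤ ⨆ (s : ℝ) (_ : 0 < s), ((DIS S (hypBall S H h s)).card : ℝ) / (s * S.card) := by
    have h1 : ((DIS S (hypBall S H h (lam * r))).card : ℝ) / (lam * r * S.card)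
        = ⨆ _ : 0 < lam * r,
            ((DIS S (hypBall S H h (lam * r))).card : ℝ) / (lam * r * S.card) := by
      rw [ciSup_pos (mul_pos hlam0 hr)]
    rw [h1]
    exact le_ciSup hbdd (lam * r)
  calc (∑ x ∈ DIS S (hypBallW S W H h r), W x) / (r * ∑ x ∈ S, W x)
      ≤ lam ^ 2 * ((DIS S (hypBall S H h (lam * r))).card : ℝ) / (lam * r * S.card) :=
        key r hr
    _ = lam ^ 2 * (((DIS S (hypBall S H h (lam * r))).card : ℝ) / (lam * r * S.card)) :=
        mul_div_assoc _ _ _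
    _ ≤ _ := mul_le_mul_of_nonneg_left hterm (by positivity)
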